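/- arXiv:2006.10185 — 8 statements merged into one kernel-verified Lean document; each statement's English description precedes it below -/
import Mathlib

section
/- Let Σ ∈ ℝ^{n×n} be a symmetric positive definite matrix, let μ, μ̂, x ∈ ℝ^n, let β ≥ 0 with ‖μ̂ − μ‖_Σ ≤ β, let α ≥ 1, and let c₀, τ ∈ ℝ. If c₀ + ⟨x, μ̂⟩ + α β ‖x‖_{Σ⁻¹} ≤ τ, then c₀ + ⟨x, μ⟩ ≤ τ. -/
/-!
Cauchy–Schwarz for the inner product `⟨u, v⟩_Σ = uᵀ Σ v`, applied to `Σ⁻¹ x` and `μ̂ - μ`, gives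
`|⟨x, μ̂ - μ⟩| ≤ ‖x‖_{Σ⁻¹} ‖μ̂ - μ‖_Σ ≤ β ‖x‖_{Σ⁻¹} ≤ α β ‖x‖_{Σ⁻¹}`, so the pessimistic margin
absorbs the estimation error.
-/

open Matrix

namespace Matrix

variable {n : Type*} [Fintype n]

theorem PosSemidef.sq_dotProduct_mulVec_le {R : Type*} [CommRing R] [LinearOrder R]
    [IsStrictOrderedRing R] [StarRing R] [TrivialStar R] {S : Matrix n n R} (hS : S.PosSemidef)
    (u v : n → R) : (u ⬝ᵥ (S *ᵥ v)) ^ 2 ≤ (u ⬝ᵥ (S *ᵥ u)) * (v ⬝ᵥ (S *ᵥ v)) := by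
  classical
  have hsymm : (toBilin' S).IsSymm :=
    isSymm_toBilin'_iff_isSymm.mpr (isHermitian_iff_isSymm.mp hS.isHermitian)
  simpa only [toBilin'_apply'] using
    (toBilin' S).apply_sq_le_of_symm
      (fun w => by simpa only [toBilin'_apply', star_trivial] using hS.dotProduct_mulVec_nonneg w)
      (LinearMap.BilinForm.isSymm_iff.mp hsymm) u v

theorem PosDef.sq_dotProduct_le_inv_mul {K : Type*} [Field K] [LinearOrder K]
    [IsStrictOrderedRing K] [StarRing K] [TrivialStar K] [DecidableEq n] {S : Matrix n n K}
    (hS : S.PosDef) (x d : n → K) :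
    (x ⬝ᵥ d) ^ 2 ≤ (x ⬝ᵥ (S⁻¹ *ᵥ x)) * (d ⬝ᵥ (S *ᵥ d)) := by
  have hx : S *ᵥ (S⁻¹ *ᵥ x) = x := by
    rw [mulVec_mulVec, mul_nonsing_inv S ((isUnit_iff_isUnit_det S).mp hS.isUnit), one_mulVec]
  have hsymm : Sᵀ = S := isHermitian_iff_isSymm.mp hS.isHermitian
  have hflip (u v : n → K) : u ⬝ᵥ (S *ᵥ v) = (S *ᵥ u) ⬝ᵥ v := by
    rw [dotProduct_mulVec, ← mulVec_transpose, hsymm]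
  simpa only [hflip _ d, hflip _ (S⁻¹ *ᵥ x), hx, dotProduct_comm (S⁻¹ *ᵥ x)] using
    hS.posSemidef.sq_dotProduct_mulVec_le (S⁻¹ *ᵥ x) d

theorem PosDef.abs_dotProduct_le_sqrt_mul_sqrt [DecidableEq n] {S : Matrix n n ℝ}
    (hS : S.PosDef) (x d : n → ℝ) :
    |x ⬝ᵥ d| ≤ √(x ⬝ᵥ (S⁻¹ *ᵥ x)) * √(d ⬝ᵥ (S *ᵥ d)) := by
  have hx : 0 ≤ x ⬝ᵥ (S⁻¹ *ᵥ x) := by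
    simpa only [star_trivial] using hS.inv.posSemidef.dotProduct_mulVec_nonneg x
  rw [← Real.sqrt_mul hx]
  exact Real.abs_le_sqrt (hS.sq_dotProduct_le_inv_mul x d)

end Matrix

theorem stmt1_general (n : ℕ) (S : Matrix (Fin n) (Fin n) ℝ) (hS : S.PosDef)
    (μ μhat x : Fin n → ℝ) (β : ℝ)
    (hconf : Real.sqrt ((μhat - μ) ⬝ᵥ (S *ᵥ (μhat - μ))) ≤ β)
    (α : ℝ) (hα : 1 ≤ α) (c₀ τ : ℝ)
    (h : c₀ + x ⬝ᵥ μhat + α * β * Real.sqrt (x ⬝ᵥ (S⁻¹ *ᵥ x)) ≤ τ) :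
    c₀ + x ⬝ᵥ μ ≤ τ := by
  have hβ : 0 ≤ β := (Real.sqrt_nonneg _).trans hconf
  have hdev := hS.abs_dotProduct_le_sqrt_mul_sqrt x (μhat - μ)
  calc c₀ + x ⬝ᵥ μ = c₀ + x ⬝ᵥ μhat - x ⬝ᵥ (μhat - μ) := by rw [dotProduct_sub]; ring
    _ ≤ c₀ + x ⬝ᵥ μhat + √(x ⬝ᵥ (S⁻¹ *ᵥ x)) * β := by
        linarith [neg_abs_le (x ⬝ᵥ (μhat - μ)),
          mul_le_mul_of_nonneg_left hconf (Real.sqrt_nonneg (x ⬝ᵥ (S⁻¹ *ᵥ x)))]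
    _ ≤ c₀ + x ⬝ᵥ μhat + α * β * √(x ⬝ᵥ (S⁻¹ *ᵥ x)) := by
        rw [mul_comm _ β]
        gcongr
        exact le_mul_of_one_le_left hβ hα
    _ ≤ τ := h

/-- If `‖μ̂ - μ‖_Σ ≤ β`, `α ≥ 1`, and the pessimistic cost
`c₀ + ⟨x, μ̂⟩ + α β ‖x‖_{Σ⁻¹}` is at most `τ`, then the true cost `c₀ + ⟨x, μ⟩` is at most `τ`. -/
theorem stmt1 (n : ℕ) (S : Matrix (Fin n) (Fin n) ℝ) (hS : S.PosDef)
    (μ μhat x : Fin n → ℝ) (β : ℝ) (hβ : 0 ≤ β)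
    (hconf : Real.sqrt ((μhat - μ) ⬝ᵥ (S *ᵥ (μhat - μ))) ≤ β)
    (α : ℝ) (hα : 1 ≤ α) (c₀ τ : ℝ)
    (h : c₀ + x ⬝ᵥ μhat + α * β * Real.sqrt (x ⬝ᵥ (S⁻¹ *ᵥ x)) ≤ τ) :
    c₀ + x ⬝ᵥ μ ≤ τ :=
  stmt1_general n S hS μ μhat x β hconf α hα c₀ τ h
end

section
/- Let d ≥ 2 and let Σ ∈ ℝ^{d×d} be a symmetric positive definite matrix written in block form Σ = [[z, δᵀ],[δ, A]] with z ∈ ℝ, δ ∈ ℝ^{d−1}, and A ∈ ℝ^{(d−1)×(d−1)} the principal submatrix of Σ obtained by deleting the first row and first column. Then for every x ∈ ℝ^d with x = (x₁, x′) where x′ ∈ ℝ^{d−1}, one has x′ᵀ A⁻¹ x′ ≤ xᵀ Σ⁻¹ x. -/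
/-!
The form `x ↦ xᵀ S⁻¹ x` is a maximum of affine functions: `xᵀ S⁻¹ x = max_v (2 vᵀx - vᵀ S v)`,
attained at `v = S⁻¹ x`. Restricting `v` to the range of `Rᵀ` leaves the same problem for
`R S Rᵀ` and `R x`, so `(R x)ᵀ (R S Rᵀ)⁻¹ (R x) ≤ xᵀ S⁻¹ x`. Deleting coordinates is the
case where `R` is a selection matrix, for which `R S Rᵀ` is the principal submatrix.
-/

open Matrix

namespace Matrix

variable {m n : Type*} [Fintype n]

theorem IsSymm.dotProduct_mulVec_comm {R : Type*} [CommSemiring R] {S : Matrix n n R}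
    (hS : S.IsSymm) (a b : n → R) : a ⬝ᵥ (S *ᵥ b) = b ⬝ᵥ (S *ᵥ a) := by
  simpa [hS.eq] using dotProduct_transpose_mulVec S a b

variable [DecidableEq n]

theorem one_submatrix_mulVec {R : Type*} [NonAssocSemiring R] (e : m → n) (x : n → R) :
    (1 : Matrix n n R).submatrix e id *ᵥ x = x ∘ e := by
  ext i
  simp [mulVec, dotProduct, one_apply]

theorem one_submatrix_mul_mul_transpose {R : Type*} [CommSemiring R] (e : m → n)
    (S : Matrix n n R) :
    (1 : Matrix n n R).submatrix e id * S * ((1 : Matrix n n R).submatrix e id)ᵀ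
      = S.submatrix e e := by
  ext i j
  simp [mul_apply, one_apply]

namespace PosDef

variable {S : Matrix n n ℝ}

theorem two_mul_dotProduct_sub_le_dotProduct_inv_mulVec (hS : S.PosDef) (v x : n → ℝ) :
    2 * (v ⬝ᵥ x) - v ⬝ᵥ (S *ᵥ v) ≤ x ⬝ᵥ (S⁻¹ *ᵥ x) := by
  set u := S⁻¹ *ᵥ x
  have hx : x = S *ᵥ u := by
    rw [mulVec_mulVec, mul_nonsing_inv _ hS.det_pos.ne'.isUnit, one_mulVec]
  rw [hx]
  have hgap : 0 ≤ (v - u) ⬝ᵥ (S *ᵥ (v - u)) := by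
    simpa using hS.posSemidef.dotProduct_mulVec_nonneg (v - u)
  simp only [mulVec_sub, sub_dotProduct, dotProduct_sub] at hgap
  linarith [(isHermitian_iff_isSymm.mp hS.isHermitian).dotProduct_mulVec_comm u v,
    dotProduct_comm (S *ᵥ u) u]

theorem dotProduct_inv_mul_mul_transpose_le [Fintype m] [DecidableEq m] (hS : S.PosDef)
    (R : Matrix m n ℝ) (x : n → ℝ) :
    (R *ᵥ x) ⬝ᵥ ((R * S * Rᵀ)⁻¹ *ᵥ (R *ᵥ x)) ≤ x ⬝ᵥ (S⁻¹ *ᵥ x) := by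
  set T := R * S * Rᵀ
  by_cases hT : IsUnit T.det
  · set y := T⁻¹ *ᵥ (R *ᵥ x)
    have hTy : T *ᵥ y = R *ᵥ x := by
      rw [mulVec_mulVec, mul_nonsing_inv _ hT, one_mulVec]
    have hlin : (Rᵀ *ᵥ y) ⬝ᵥ x = y ⬝ᵥ (R *ᵥ x) := by
      rw [dotProduct_comm, dotProduct_transpose_mulVec]
    have hquad : (Rᵀ *ᵥ y) ⬝ᵥ (S *ᵥ (Rᵀ *ᵥ y)) = y ⬝ᵥ (T *ᵥ y) := by
      rw [show T *ᵥ y = R *ᵥ (S *ᵥ (Rᵀ *ᵥ y)) by simp only [T, ← mulVec_mulVec],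
        ← dotProduct_transpose_mulVec R, dotProduct_comm]
    have key := hS.two_mul_dotProduct_sub_le_dotProduct_inv_mulVec (Rᵀ *ᵥ y) x
    rw [hlin, hquad, hTy] at key
    rw [dotProduct_comm]
    linarith
  -- A singular `R S Rᵀ` has junk inverse `0`.
  · rw [nonsing_inv_apply_not_isUnit _ hT, zero_mulVec, dotProduct_zero]
    simpa using hS.posSemidef.inv.dotProduct_mulVec_nonneg x

theorem dotProduct_submatrix_inv_le [Fintype m] [DecidableEq m] (hS : S.PosDef) (e : m → n)
    (x : n → ℝ) : (x ∘ e) ⬝ᵥ ((S.submatrix e e)⁻¹ *ᵥ (x ∘ e)) ≤ x ⬝ᵥ (S⁻¹ *ᵥ x) := by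
  simpa only [one_submatrix_mul_mul_transpose, one_submatrix_mulVec] using
    hS.dotProduct_inv_mul_mul_transpose_le ((1 : Matrix n n ℝ).submatrix e id) x

end PosDef
end Matrix

theorem stmt2_general (n : ℕ)
    (S : Matrix (Fin (n + 1)) (Fin (n + 1)) ℝ) (hS : S.PosDef)
    (x : Fin (n + 1) → ℝ) :
    (x ∘ Fin.succ) ⬝ᵥ ((S.submatrix Fin.succ Fin.succ)⁻¹ *ᵥ (x ∘ Fin.succ))
      ≤ x ⬝ᵥ (S⁻¹ *ᵥ x) :=
  hS.dotProduct_submatrix_inv_le Fin.succ x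

/-- For a symmetric positive definite matrix `Σ` of size `d = n + 1 ≥ 2` with
principal submatrix `A` obtained by deleting the first row and column, and any vector
`x = (x₁, x')`, one has `x'ᵀ A⁻¹ x' ≤ xᵀ Σ⁻¹ x`. -/
theorem stmt2 (n : ℕ) (hn : 1 ≤ n)
    (S : Matrix (Fin (n + 1)) (Fin (n + 1)) ℝ) (hS : S.PosDef)
    (x : Fin (n + 1) → ℝ) :
    (x ∘ Fin.succ) ⬝ᵥ ((S.submatrix Fin.succ Fin.succ)⁻¹ *ᵥ (x ∘ Fin.succ))
      ≤ x ⬝ᵥ (S⁻¹ *ᵥ x) :=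
  stmt2_general n S hS x
end

section
/- Let τ, c₀ ∈ ℝ with 0 ≤ c₀ < τ, let C₁ ≥ 0, let r ∈ [0,1], and let α_r, α_c ≥ 1 satisfy 1 + α_c ≤ (τ − c₀)(α_r − 1). Then ((τ − c₀) / (τ − c₀ + (1 + α_c) C₁)) · (r + (α_r − 1) C₁) ≥ r. -/
theorem le_div_add_mul_mul_add_mul {K : Type*} [Field K] [LinearOrder K] [IsStrictOrderedRing K]
    {d k a C r : K} (hd : 0 < d) (hk : 0 ≤ k) (hC : 0 ≤ C) (hr : r ≤ 1) (hka : k ≤ d * a) :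
    r ≤ d / (d + k * C) * (r + a * C) := by
  have hkC : 0 ≤ k * C := mul_nonneg hk hC
  rw [div_mul_eq_mul_div, le_div_iff₀ (by positivity)]
  calc r * (d + k * C) = r * d + r * (k * C) := by ring
    _ ≤ r * d + k * C := add_le_add_right (mul_le_of_le_one_left hkC hr) _
    _ ≤ r * d + d * a * C := by gcongr
    _ = d * (r + a * C) := by ring

theorem stmt3_general (τ c₀ C₁ r αr αc : ℝ) (hcτ : c₀ < τ) (hC : 0 ≤ C₁)
    (hr1 : r ≤ 1) (hαc : 1 ≤ αc)
    (hcond : 1 + αc ≤ (τ - c₀) * (αr - 1)) :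
    r ≤ (τ - c₀) / (τ - c₀ + (1 + αc) * C₁) * (r + (αr - 1) * C₁) :=
  le_div_add_mul_mul_add_mul (sub_pos.mpr hcτ) (by linarith) hC hr1 hcond

/-- the scalar inequality at the core of the optimism lemmas: if
`0 ≤ c₀ < τ`, `C₁ ≥ 0`, `r ∈ [0,1]`, `α_r, α_c ≥ 1` and `1 + α_c ≤ (τ - c₀)(α_r - 1)`, then
`((τ - c₀) / (τ - c₀ + (1 + α_c) C₁)) (r + (α_r - 1) C₁) ≥ r`. -/
theorem stmt3 (τ c₀ C₁ r αr αc : ℝ) (hc₀ : 0 ≤ c₀) (hcτ : c₀ < τ) (hC : 0 ≤ C₁)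
    (hr0 : 0 ≤ r) (hr1 : r ≤ 1) (hαr : 1 ≤ αr) (hαc : 1 ≤ αc)
    (hcond : 1 + αc ≤ (τ - c₀) * (αr - 1)) :
    r ≤ (τ - c₀) / (τ - c₀ + (1 + αc) * C₁) * (r + (αr - 1) * C₁) :=
  stmt3_general τ c₀ C₁ r αr αc hcτ hC hr1 hαc hcond
end

section
/- Let K ≥ 1 and let r̄, c̄ ∈ [0,1]^K be true mean reward and cost vectors, let τ ∈ ℝ with c̄₁ < τ, let β ∈ ℝ^K with β_a ≥ 0 for all a, and let α_r, α_c ≥ 1 satisfy 1 + α_c ≤ (τ − c̄₁)(α_r − 1). Suppose u^r, u^c ∈ ℝ^K satisfy: (i) r̄_a + (α_r − 1)β_a ≤ u^r_a for all arms a; (ii) c̄_a ≤ u^c_a ≤ c̄_a + (1 + α_c)β_a for all arms a ≠ 1; and (iii) u^c_1 = c̄₁. Let π* ∈ Δ_K satisfy Σ_a π*_a c̄_a ≤ τ, and let π_t ∈ Δ_K be any maximizer of Σ_a π_a u^r_a over {π ∈ Δ_K : Σ_a π_a u^c_a ≤ τ}. Then Σ_a (π_t)_a u^r_a ≥ Σ_a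 π*_a r̄_a. -/
/-!
Mix the feasible policy `π*` with the safe arm: `q = ρ π* + (1 - ρ) e₁`. The pessimistic cost of
`π*` exceeds `τ` by at most `(1 + α_c) B`, where `B = Σ π*_a β_a`, while the safe arm leaves slack
`τ - c̄₁`; the weight `ρ = (τ - c̄₁) / (τ - c̄₁ + (1 + α_c) B)` exactly balances the two, so `q` is
feasible for the optimistic LP. Its optimistic value is at least `ρ (R + (α_r - 1) B)` with
`R = Σ π*_a r̄_a ≤ 1`, and `1 + α_c ≤ (τ - c̄₁)(α_r - 1)` says precisely that the optimism bonus
`ρ (α_r - 1) B` pays for the mass `1 - ρ ≥ (1 - ρ) R` moved to the safe arm.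
-/

theorem mix_single_dotProduct {ι : Type*} [Fintype ι] [DecidableEq ι]
    (ρ : ℝ) (p f : ι → ℝ) (i₀ : ι) :
    (ρ • p + (1 - ρ) • Pi.single i₀ 1) ⬝ᵥ f = ρ * (p ⬝ᵥ f) + (1 - ρ) * f i₀ := by
  simp [add_dotProduct, smul_dotProduct, single_dotProduct]

section MixingWeight

variable {g E : ℝ}

theorem mix_le_of_le_add (hg : 0 < g) (hE : 0 ≤ E) {C c₀ : ℝ} (hC : C ≤ c₀ + g + E) :
    g / (g + E) * C + (1 - g / (g + E)) * c₀ ≤ c₀ + g := by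
  have hρ : g / (g + E) * (g + E) = g := div_mul_cancel₀ _ (by linarith)
  have : g / (g + E) * (C - c₀) ≤ g / (g + E) * (g + E) :=
    mul_le_mul_of_nonneg_left (by linarith) (div_nonneg hg.le (by linarith))
  linarith

theorem one_sub_div_add_le (hg : 0 < g) (hE : 0 ≤ E) {L : ℝ} (hEL : E ≤ g * L) :
    1 - g / (g + E) ≤ g / (g + E) * L := by
  have hgE : 0 < g + E := by linarith
  rw [← mul_div_right_comm, one_sub_div hgE.ne', add_sub_cancel_left]
  exact div_le_div_of_nonneg_right hEL hgE.le

end MixingWeight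

theorem le_mix_of_one_sub_le_mul {ρ R L V u₀ : ℝ} (hρ0 : 0 ≤ ρ) (hρ1 : ρ ≤ 1) (hR : R ≤ 1)
    (hu₀ : 0 ≤ u₀) (hρL : 1 - ρ ≤ ρ * L) (hV : R + L ≤ V) :
    R ≤ ρ * V + (1 - ρ) * u₀ := by
  nlinarith [mul_le_mul_of_nonneg_left hR (sub_nonneg.2 hρ1), mul_nonneg (sub_nonneg.2 hρ1) hu₀]

theorem exists_mem_stdSimplex_dotProduct_le_and_le {ι : Type*} [Fintype ι] [DecidableEq ι]
    (i₀ : ι) {rbar cbar β ur uc p : ι → ℝ} {τ κ η : ℝ}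
    (hr : rbar ≤ 1) (hβ : 0 ≤ β) (hκ : 0 ≤ κ) (hτ : uc i₀ < τ) (hcond : κ ≤ (τ - uc i₀) * η)
    (hur : rbar + η • β ≤ ur) (hur₀ : 0 ≤ ur i₀) (huc : uc ≤ cbar + κ • β)
    (hp : p ∈ stdSimplex ℝ ι) (hpc : p ⬝ᵥ cbar ≤ τ) :
    ∃ q ∈ stdSimplex ℝ ι, q ⬝ᵥ uc ≤ τ ∧ p ⬝ᵥ rbar ≤ q ⬝ᵥ ur := by
  set B := p ⬝ᵥ β
  set g := τ - uc i₀
  set ρ := g / (g + κ * B)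
  have hg : 0 < g := sub_pos.2 hτ
  have hB : 0 ≤ B := dotProduct_nonneg_of_nonneg hp.1 hβ
  have hE : 0 ≤ κ * B := mul_nonneg hκ hB
  have hρ0 : 0 ≤ ρ := div_nonneg hg.le (by linarith)
  have hρ1 : ρ ≤ 1 := (div_le_one (by linarith)).2 (by linarith)
  have hcost : p ⬝ᵥ uc ≤ uc i₀ + g + κ * B := by
    have := dotProduct_le_dotProduct_of_nonneg_left huc hp.1
    rw [dotProduct_add, dotProduct_smul, smul_eq_mul] at this
    linarith
  have hvalue : p ⬝ᵥ rbar + η * B ≤ p ⬝ᵥ ur := by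
    have := dotProduct_le_dotProduct_of_nonneg_left hur hp.1
    rwa [dotProduct_add, dotProduct_smul, smul_eq_mul] at this
  have hR : p ⬝ᵥ rbar ≤ 1 := by
    have := dotProduct_le_dotProduct_of_nonneg_left hr hp.1
    rwa [dotProduct_one, hp.2] at this
  have hbonus : 1 - ρ ≤ ρ * (η * B) :=
    one_sub_div_add_le hg hE (by nlinarith [mul_le_mul_of_nonneg_right hcond hB])
  refine ⟨ρ • p + (1 - ρ) • Pi.single i₀ 1,
    convex_stdSimplex ℝ ι hp (single_mem_stdSimplex ℝ i₀) hρ0 (sub_nonneg.2 hρ1) (by ring),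
    ?_, ?_⟩
  · rw [mix_single_dotProduct]
    linarith [mix_le_of_le_add hg hE hcost]
  · rw [mix_single_dotProduct]
    exact le_mix_of_one_sub_le_mul hρ0 hρ1 hR hur₀ hbonus hvalue

/-- The paper's safe arm 1 is `⟨0, hK⟩`. -/
theorem stmt4_general (K : ℕ) (hK : 1 ≤ K) (rbar cbar β ur uc : Fin K → ℝ)
    (hr : ∀ a, rbar a ∈ Set.Icc (0 : ℝ) 1)
    (τ : ℝ) (hτ : cbar ⟨0, hK⟩ < τ)
    (hβ : ∀ a, 0 ≤ β a)
    (αr αc : ℝ) (hαr : 1 ≤ αr) (hαc : 1 ≤ αc)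
    (hcond : 1 + αc ≤ (τ - cbar ⟨0, hK⟩) * (αr - 1))
    (hur : ∀ a, rbar a + (αr - 1) * β a ≤ ur a)
    (huc : ∀ a, a ≠ ⟨0, hK⟩ → cbar a ≤ uc a ∧ uc a ≤ cbar a + (1 + αc) * β a)
    (huc0 : uc ⟨0, hK⟩ = cbar ⟨0, hK⟩)
    (πstar πt : Fin K → ℝ)
    (hπs_nonneg : ∀ a, 0 ≤ πstar a) (hπs_sum : ∑ a, πstar a = 1)
    (hπs_feas : ∑ a, πstar a * cbar a ≤ τ)
    (hπt_max : ∀ π : Fin K → ℝ, (∀ a, 0 ≤ π a) → ∑ a, π a = 1 → ∑ a, π a * uc a ≤ τ →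
      ∑ a, π a * ur a ≤ ∑ a, πt a * ur a) :
    ∑ a, πstar a * rbar a ≤ ∑ a, πt a * ur a := by
  set z : Fin K := ⟨0, hK⟩
  have hur₀ : 0 ≤ ur z := by nlinarith [hur z, (hr z).1, hβ z]
  have huc_le : ∀ a, uc a ≤ cbar a + (1 + αc) * β a := by
    intro a
    by_cases ha : a = z
    · subst ha; nlinarith [hβ z]
    · exact (huc a ha).2
  obtain ⟨q, ⟨hq_nonneg, hq_sum⟩, hq_feas, hq_value⟩ :=
    exists_mem_stdSimplex_dotProduct_le_and_le z (fun a => (hr a).2) hβ (by linarith)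
      (huc0 ▸ hτ) (huc0 ▸ hcond) hur hur₀ huc_le ⟨hπs_nonneg, hπs_sum⟩ hπs_feas
  exact hq_value.trans (hπt_max q hq_nonneg hq_sum hq_feas)

/-- MAB optimism lemma (deterministic content). On the confidence event,
with `1 + α_c ≤ (τ - c̄₁)(α_r - 1)`, the optimistic value of the LP maximizer dominates
the true value of any feasible policy. Arm `⟨0, hK⟩` plays the role of the safe arm 1. -/
theorem stmt4 (K : ℕ) (hK : 1 ≤ K) (rbar cbar β ur uc : Fin K → ℝ)
    (hr : ∀ a, rbar a ∈ Set.Icc (0 : ℝ) 1) (hc : ∀ a, cbar a ∈ Set.Icc (0 : ℝ) 1)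
    (τ : ℝ) (hτ : cbar ⟨0, hK⟩ < τ)
    (hβ : ∀ a, 0 ≤ β a)
    (αr αc : ℝ) (hαr : 1 ≤ αr) (hαc : 1 ≤ αc)
    (hcond : 1 + αc ≤ (τ - cbar ⟨0, hK⟩) * (αr - 1))
    (hur : ∀ a, rbar a + (αr - 1) * β a ≤ ur a)
    (huc : ∀ a, a ≠ ⟨0, hK⟩ → cbar a ≤ uc a ∧ uc a ≤ cbar a + (1 + αc) * β a)
    (huc0 : uc ⟨0, hK⟩ = cbar ⟨0, hK⟩)
    (πstar πt : Fin K → ℝ)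
    (hπs_nonneg : ∀ a, 0 ≤ πstar a) (hπs_sum : ∑ a, πstar a = 1)
    (hπs_feas : ∑ a, πstar a * cbar a ≤ τ)
    (hπt_nonneg : ∀ a, 0 ≤ πt a) (hπt_sum : ∑ a, πt a = 1)
    (hπt_feas : ∑ a, πt a * uc a ≤ τ)
    (hπt_max : ∀ π : Fin K → ℝ, (∀ a, 0 ≤ π a) → ∑ a, π a = 1 → ∑ a, π a * uc a ≤ τ →
      ∑ a, π a * ur a ≤ ∑ a, πt a * ur a) :
    ∑ a, πstar a * rbar a ≤ ∑ a, πt a * ur a :=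
  stmt4_general K hK rbar cbar β ur uc hr τ hτ hβ αr αc hαr hαc hcond hur huc huc0 πstar πt
    hπs_nonneg hπs_sum hπs_feas hπt_max
end

section
/- Let K ≥ 1, let u^r, u^c ∈ ℝ^K, and let τ ∈ ℝ. Consider the linear program: maximize Σ_a π_a u^r_a over π ∈ Δ_K subject to Σ_a π_a u^c_a ≤ τ. If this program is feasible, then it admits an optimal solution π with at most 2 nonzero entries. -/
/-!
A point `π ≥ 0` whose support has more than `m + 1` elements can be moved along a nonzero
direction `d` supported on its support and orthogonal to `1` and to the `m` constraint vectors: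
such a `d` exists by counting dimensions. Choosing the sign of `d` so that the objective does
not decrease, `d` has a negative entry since its entries sum to zero, so we may walk along `d`
until the first coordinate hits zero. This keeps `π ≥ 0`, the total mass and the constraint
values, does not decrease the objective and shrinks the support. Iterating on an optimum of the
(compact, nonempty) feasible set of the bandit program, whose only constraint besides the
simplex is the cost, gives an optimum supported on at most two arms.
-/
open Finset Matrix Module

variable {ι : Type*} [Fintype ι]

theorem exists_ne_zero_dotProduct_eq_zero_of_lt_card [DecidableEq ι] {m : ℕ}
    (c : Fin m → ι → ℝ) {S : Finset ι} (h : m < #S) :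
    ∃ d : ι → ℝ, d ≠ 0 ∧ (∀ i ∉ S, d i = 0) ∧ ∀ j, d ⬝ᵥ c j = 0 := by
  -- `d` in the kernel of `F` is orthogonal to every `c j` and vanishes off `S`.
  let F := (Matrix.of c).mulVecLin.prod (LinearMap.funLeft ℝ ℝ ((↑) : {i // i ∉ S} → ι))
  have hrank : finrank ℝ ((Fin m → ℝ) × ({i // i ∉ S} → ℝ)) < finrank ℝ (ι → ℝ) := by
    simp only [finrank_prod, finrank_fintype_fun_eq_card, Fintype.card_fin]
    rw [Fintype.card_subtype_compl, Fintype.card_coe]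
    have := S.card_le_univ
    omega
  obtain ⟨d, hd, hd0⟩ :=
    (Submodule.ne_bot_iff _).1 (LinearMap.ker_ne_bot_of_finrank_lt (f := F) hrank)
  simp only [LinearMap.mem_ker, F, LinearMap.prod_apply, Function.prod, Prod.mk_eq_zero,
    funext_iff, mulVecLin_apply, LinearMap.funLeft_apply, Pi.zero_apply, mulVec, of_apply] at hd
  exact ⟨d, hd0, fun i hi => hd.2 ⟨i, hi⟩, fun j => dotProduct_comm d _ ▸ hd.1 j⟩

theorem exists_nonneg_add_smul_card_support_lt {π d : ι → ℝ} (hπ : 0 ≤ π)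
    (hd : ∀ i, π i = 0 → d i = 0) (hneg : ∃ i, d i < 0) :
    ∃ t : ℝ, 0 ≤ t ∧ 0 ≤ π + t • d ∧ #{i | (π + t • d) i ≠ 0} < #{i | π i ≠ 0} := by
  obtain ⟨i₀, hi₀, hmin⟩ := ({i | d i < 0} : Finset ι).exists_min_image (fun i => π i / -d i)
    (by obtain ⟨i, hi⟩ := hneg; exact ⟨i, by simpa using hi⟩)
  replace hi₀ : d i₀ < 0 := by simpa using hi₀
  have hπi₀ : π i₀ ≠ 0 := fun h => hi₀.ne (hd i₀ h)
  refine ⟨π i₀ / -d i₀, div_nonneg (hπ i₀) (by linarith), fun i => ?_, ?_⟩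
  · simp only [Pi.zero_apply, Pi.add_apply, Pi.smul_apply, smul_eq_mul]
    rcases lt_or_ge (d i) 0 with hi | hi
    · have := (le_div_iff₀ (by linarith)).1 (hmin i (by simpa using hi))
      linarith
    · exact add_nonneg (hπ i) (mul_nonneg (div_nonneg (hπ i₀) (by linarith)) hi)
  · refine card_lt_card ((Finset.ssubset_iff_of_subset fun i => ?_).2 ⟨i₀, ?_, ?_⟩)
    · simp only [mem_filter, mem_univ, true_and, Pi.add_apply, Pi.smul_apply, smul_eq_mul]
      intro h hπi
      simp [hπi, hd i hπi] at h
    · simpa using hπi₀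
    · simp only [mem_filter, mem_univ, true_and, not_not, Pi.add_apply, Pi.smul_apply, smul_eq_mul]
      rw [div_mul_eq_mul_div, div_neg, mul_div_assoc, div_self hi₀.ne]
      ring

theorem exists_card_support_lt_of_add_one_lt {m : ℕ} (c : Fin m → ι → ℝ) (r : ι → ℝ)
    {π : ι → ℝ} (hπ : 0 ≤ π) (h : m + 1 < #{i | π i ≠ 0}) :
    ∃ π' : ι → ℝ, 0 ≤ π' ∧ π' ⬝ᵥ 1 = π ⬝ᵥ 1 ∧ (∀ j, π' ⬝ᵥ c j = π ⬝ᵥ c j) ∧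
      π ⬝ᵥ r ≤ π' ⬝ᵥ r ∧ #{i | π' i ≠ 0} < #{i | π i ≠ 0} := by
  classical
  obtain ⟨d, hd0, hdS, hdc⟩ := exists_ne_zero_dotProduct_eq_zero_of_lt_card (Fin.cons 1 c) h
  have hd1 : d ⬝ᵥ 1 = 0 := hdc 0
  replace hdc : ∀ j, d ⬝ᵥ c j = 0 := fun j => hdc j.succ
  wlog hdr : 0 ≤ d ⬝ᵥ r generalizing d
  · exact this (-d) (neg_ne_zero.2 hd0) (by simpa using hdS) (by simp [hd1])
      (by simp [hdc]) (by simp only [neg_dotProduct]; linarith)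
  obtain ⟨i, -, hi⟩ := exists_pos_of_sum_zero_of_exists_nonzero (s := univ) (-d)
    (by simpa [dotProduct_one] using hd1) (by simpa [funext_iff] using hd0)
  obtain ⟨t, ht, hπ', hcard⟩ := exists_nonneg_add_smul_card_support_lt hπ
    (fun i hi => hdS i (by simpa using hi)) ⟨i, by simpa using hi⟩
  refine ⟨π + t • d, hπ', ?_, fun j => ?_, ?_, hcard⟩ <;>
    simp only [add_dotProduct, smul_dotProduct, smul_eq_mul, hd1, hdc, mul_zero, add_zero]
  exact le_add_of_nonneg_right (mul_nonneg ht hdr)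

theorem exists_card_support_le {m : ℕ} (c : Fin m → ι → ℝ) (r : ι → ℝ) {π : ι → ℝ}
    (hπ : 0 ≤ π) :
    ∃ π' : ι → ℝ, 0 ≤ π' ∧ π' ⬝ᵥ 1 = π ⬝ᵥ 1 ∧ (∀ j, π' ⬝ᵥ c j = π ⬝ᵥ c j) ∧
      π ⬝ᵥ r ≤ π' ⬝ᵥ r ∧ #{i | π' i ≠ 0} ≤ m + 1 := by
  induction hn : #{i | π i ≠ 0} using Nat.strong_induction_on generalizing π with
  | _ n ih =>
  by_cases h : n ≤ m + 1
  · exact ⟨π, hπ, rfl, fun _ => rfl, le_rfl, hn ▸ h⟩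
  obtain ⟨π₁, hπ₁, hsum₁, hc₁, hr₁, hcard₁⟩ :=
    exists_card_support_lt_of_add_one_lt c r hπ (by omega)
  obtain ⟨π₂, hπ₂, hsum₂, hc₂, hr₂, hcard₂⟩ := ih _ (hn ▸ hcard₁) hπ₁ rfl
  exact ⟨π₂, hπ₂, hsum₂.trans hsum₁, fun j => (hc₂ j).trans (hc₁ j), hr₁.trans hr₂, hcard₂⟩

theorem stmt7_general (K : ℕ) (ur uc : Fin K → ℝ) (τ : ℝ)
    (hfeas : ∃ π : Fin K → ℝ, (∀ a, 0 ≤ π a) ∧ ∑ a, π a = 1 ∧ ∑ a, π a * uc a ≤ τ) :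
    ∃ π : Fin K → ℝ, (∀ a, 0 ≤ π a) ∧ ∑ a, π a = 1 ∧ ∑ a, π a * uc a ≤ τ ∧
      (∀ π' : Fin K → ℝ, (∀ a, 0 ≤ π' a) → ∑ a, π' a = 1 → ∑ a, π' a * uc a ≤ τ →
        ∑ a, π' a * ur a ≤ ∑ a, π a * ur a) ∧
      (Finset.univ.filter (fun a => π a ≠ 0)).card ≤ 2 := by
  have hcompact : IsCompact (stdSimplex ℝ (Fin K) ∩ {π | π ⬝ᵥ uc ≤ τ}) :=
    (isCompact_stdSimplex ℝ _).inter_right (isClosed_le (by fun_prop) continuous_const)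
  obtain ⟨π₀, ⟨⟨hπ₀, hsum₀⟩, hcost₀⟩, hmax⟩ := hcompact.exists_isMaxOn (f := (· ⬝ᵥ ur))
    (let ⟨π, hπ, hsum, hcost⟩ := hfeas; ⟨π, ⟨hπ, hsum⟩, hcost⟩) (by fun_prop)
  obtain ⟨π, hπ, hsum, hcost, hr, hcard⟩ := exists_card_support_le ![uc] ur hπ₀
  rw [dotProduct_one, dotProduct_one] at hsum
  refine ⟨π, hπ, hsum.trans hsum₀, (hcost 0).trans_le hcost₀,
    fun π' hπ' hsum' hcost' => (hmax ⟨⟨hπ', hsum'⟩, hcost'⟩).trans hr, hcard⟩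

/-- the constrained bandit LP `max ∑ π_a u^r_a` over the simplex subject to
`∑ π_a u^c_a ≤ τ`, if feasible, has an optimal solution supported on at most 2 arms. -/
theorem stmt7 (K : ℕ) (hK : 1 ≤ K) (ur uc : Fin K → ℝ) (τ : ℝ)
    (hfeas : ∃ π : Fin K → ℝ, (∀ a, 0 ≤ π a) ∧ ∑ a, π a = 1 ∧ ∑ a, π a * uc a ≤ τ) :
    ∃ π : Fin K → ℝ, (∀ a, 0 ≤ π a) ∧ ∑ a, π a = 1 ∧ ∑ a, π a * uc a ≤ τ ∧
      (∀ π' : Fin K → ℝ, (∀ a, 0 ≤ π' a) → ∑ a, π' a = 1 → ∑ a, π' a * uc a ≤ τ →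
        ∑ a, π' a * ur a ≤ ∑ a, π a * ur a) ∧
      (Finset.univ.filter (fun a => π a ≠ 0)).card ≤ 2 :=
  stmt7_general K ur uc τ hfeas
end

section
/- Let K ≥ 1, m ≥ 1, let u^r ∈ ℝ^K, let u^{c,(1)}, …, u^{c,(m)} ∈ ℝ^K, and let τ₁, …, τ_m ∈ ℝ. Consider the linear program: maximize Σ_a π_a u^r_a over π ∈ Δ_K subject to Σ_a π_a u^{c,(i)}_a ≤ τ_i for every i = 1, …, m. If this program is feasible, then it admits an optimal solution π with at most m + 1 nonzero entries. -/
/-!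
The feasible set is compact, so an optimal policy `π` exists. If its support `S` has more than
`m + 1` elements, the `m + 1` linear functionals `d ↦ ∑ a, d a` and `d ↦ ∑ a, d a * u^{c,(i)}_a`
have a common nonzero zero `d` supported on `S`. Moving from `π` along `±d`, with the sign
chosen so that the reward does not decrease, keeps the mass and every constraint value fixed;
stopping when the first coordinate of `π` vanishes gives a policy that is still optimal and has
strictly smaller support.
-/

open Finset

section SupportReduction

variable {𝕜 α ι : Type*} [Field 𝕜] [Fintype α]

lemma exists_ne_zero_dotProduct_eq_zero_of_card_lt [Fintype ι] [DecidableEq α] (L : ι → α → 𝕜)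
    (s : Finset α) (h : Fintype.card ι < #s) :
    ∃ d : α → 𝕜, d ≠ 0 ∧ (∀ a ∉ s, d a = 0) ∧ ∀ i, d ⬝ᵥ L i = 0 := by
  let f : (α → 𝕜) →ₗ[𝕜] (ι → 𝕜) × (↥sᶜ → 𝕜) :=
    (Matrix.vecMulLinear (Matrix.of fun a i => L i a)).prod
      (LinearMap.funLeft 𝕜 𝕜 Subtype.val)
  have hdim : Module.finrank 𝕜 ((ι → 𝕜) × (↥sᶜ → 𝕜)) < Module.finrank 𝕜 (α → 𝕜) := by
    simp only [Module.finrank_prod, Module.finrank_fintype_fun_eq_card, Fintype.card_coe,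
      card_compl]
    have := s.card_le_univ
    omega
  obtain ⟨d, hd, hd0⟩ :=
    (Submodule.ne_bot_iff _).1 (LinearMap.ker_ne_bot_of_finrank_lt (f := f) hdim)
  obtain ⟨hL, hoff⟩ := Prod.ext_iff.1 (LinearMap.mem_ker.1 hd)
  exact ⟨d, hd0, fun a ha => congrFun hoff ⟨a, mem_compl.2 ha⟩, fun i => congrFun hL i⟩

variable [LinearOrder 𝕜] [IsStrictOrderedRing 𝕜]

lemma exists_neg_of_sum_eq_zero {d : α → 𝕜} (hd : d ≠ 0) (hsum : ∑ a, d a = 0) :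
    ∃ a, d a < 0 := by
  by_contra! hnn
  exact hd (funext fun a => (sum_eq_zero_iff_of_nonneg fun a _ => hnn a).1 hsum a (mem_univ a))

lemma exists_add_smul_nonneg_support_ssubset {π d : α → 𝕜} (hπ : 0 ≤ π)
    (hd : ∀ a, π a = 0 → d a = 0) (hneg : ∃ a, d a < 0) :
    ∃ t : 𝕜, 0 ≤ t ∧ 0 ≤ π + t • d ∧
      univ.filter (fun a => (π + t • d) a ≠ 0) ⊂ univ.filter (fun a => π a ≠ 0) := by
  obtain ⟨a₀, ha₀, hmin⟩ := (univ.filter fun a => d a < 0).exists_min_image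
    (fun a => π a / -d a) (by simpa [filter_nonempty_iff] using hneg)
  have hd₀ : d a₀ < 0 := (mem_filter.1 ha₀).2
  set t := π a₀ / -d a₀
  have ht : 0 ≤ t := div_nonneg (hπ a₀) (by linarith)
  refine ⟨t, ht, fun a => ?_, ?_⟩
  · simp only [Pi.add_apply, Pi.smul_apply, smul_eq_mul, Pi.zero_apply]
    rcases lt_or_ge (d a) 0 with hda | hda
    · have := (le_div_iff₀ (neg_pos.2 hda)).1 (hmin a (mem_filter.2 ⟨mem_univ a, hda⟩))
      linarith
    · have : 0 ≤ π a := hπ a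
      nlinarith [mul_nonneg ht hda]
  · refine (ssubset_iff_of_subset fun a => ?_).2 ⟨a₀, ?_, ?_⟩
    · simp only [mem_filter, mem_univ, true_and, Pi.add_apply, Pi.smul_apply, smul_eq_mul]
      intro h hπa
      simp [hπa, hd a hπa] at h
    · simpa using fun h => hd₀.ne (hd a₀ h)
    · simp only [mem_filter, mem_univ, true_and, Pi.add_apply, Pi.smul_apply, smul_eq_mul,
        not_not, t]
      field_simp [hd₀.ne]
      ring

lemma exists_support_ssubset_of_direction (L : ι → α → 𝕜) (r : α → 𝕜) {π d : α → 𝕜}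
    (hπ : 0 ≤ π) (hd : d ≠ 0) (hsupp : ∀ a, π a = 0 → d a = 0) (hsum : ∑ a, d a = 0)
    (hL : ∀ i, d ⬝ᵥ L i = 0) (hr : 0 ≤ d ⬝ᵥ r) :
    ∃ π' : α → 𝕜, 0 ≤ π' ∧ ∑ a, π' a = ∑ a, π a ∧ (∀ i, π' ⬝ᵥ L i = π ⬝ᵥ L i) ∧
      π ⬝ᵥ r ≤ π' ⬝ᵥ r ∧
      #(univ.filter fun a => π' a ≠ 0) < #(univ.filter fun a => π a ≠ 0) := by
  obtain ⟨t, ht, hπ', hlt⟩ :=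
    exists_add_smul_nonneg_support_ssubset hπ hsupp (exists_neg_of_sum_eq_zero hd hsum)
  refine ⟨π + t • d, hπ', ?_, fun i => ?_, ?_, card_lt_card hlt⟩
  · simp [sum_add_distrib, ← mul_sum, hsum]
  · simp [add_dotProduct, smul_dotProduct, hL i]
  · simpa [add_dotProduct, smul_dotProduct] using mul_nonneg ht hr

lemma exists_support_ssubset_of_card_lt [Fintype ι] (L : ι → α → 𝕜) (r : α → 𝕜) {π : α → 𝕜}
    (hπ : 0 ≤ π) (hcard : Fintype.card ι + 1 < #(univ.filter fun a => π a ≠ 0)) :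
    ∃ π' : α → 𝕜, 0 ≤ π' ∧ ∑ a, π' a = ∑ a, π a ∧ (∀ i, π' ⬝ᵥ L i = π ⬝ᵥ L i) ∧
      π ⬝ᵥ r ≤ π' ⬝ᵥ r ∧
      #(univ.filter fun a => π' a ≠ 0) < #(univ.filter fun a => π a ≠ 0) := by
  classical
  -- The mass constraint `∑ a, π a` is the extra functional `1`, indexed by `none`.
  obtain ⟨d, hd, hsupp, hker⟩ := exists_ne_zero_dotProduct_eq_zero_of_card_lt
    (fun o : Option ι => o.elim 1 L) _ (by rwa [Fintype.card_option])
  have hsupp' : ∀ a, π a = 0 → d a = 0 := fun a ha => hsupp a (by simp [ha])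
  have hsum : ∑ a, d a = 0 := by simpa [dotProduct_one] using hker none
  have hL : ∀ i, d ⬝ᵥ L i = 0 := fun i => hker (some i)
  rcases le_total 0 (d ⬝ᵥ r) with hr | hr
  · exact exists_support_ssubset_of_direction L r hπ hd hsupp' hsum hL hr
  · refine exists_support_ssubset_of_direction L r hπ (neg_ne_zero.2 hd)
      (fun a ha => by simp [hsupp' a ha]) (by simp [hsum]) (fun i => by simp [hL i]) ?_
    simpa using hr

theorem exists_sparse_of_nonneg [Fintype ι] (L : ι → α → 𝕜) (r : α → 𝕜) {π : α → 𝕜}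
    (hπ : 0 ≤ π) :
    ∃ π' : α → 𝕜, 0 ≤ π' ∧ ∑ a, π' a = ∑ a, π a ∧ (∀ i, π' ⬝ᵥ L i = π ⬝ᵥ L i) ∧
      π ⬝ᵥ r ≤ π' ⬝ᵥ r ∧ #(univ.filter fun a => π' a ≠ 0) ≤ Fintype.card ι + 1 := by
  induction hn : #(univ.filter fun a => π a ≠ 0) using Nat.strong_induction_on
    generalizing π with
  | _ n ih =>
    by_cases hcard : n ≤ Fintype.card ι + 1
    · exact ⟨π, hπ, rfl, fun _ => rfl, le_rfl, hn ▸ hcard⟩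
    obtain ⟨π₁, hπ₁, hsum₁, hL₁, hr₁, hlt₁⟩ :=
      exists_support_ssubset_of_card_lt L r hπ (hn ▸ not_le.1 hcard)
    obtain ⟨π₂, hπ₂, hsum₂, hL₂, hr₂, hcard₂⟩ := ih _ (hn ▸ hlt₁) hπ₁ rfl
    exact ⟨π₂, hπ₂, hsum₂.trans hsum₁, fun i => (hL₂ i).trans (hL₁ i), hr₁.trans hr₂, hcard₂⟩

end SupportReduction

theorem stmt8_general (K m : ℕ)
    (ur : Fin K → ℝ) (uc : Fin m → Fin K → ℝ) (τ : Fin m → ℝ)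
    (hfeas : ∃ π : Fin K → ℝ, (∀ a, 0 ≤ π a) ∧ ∑ a, π a = 1 ∧
      ∀ i, ∑ a, π a * uc i a ≤ τ i) :
    ∃ π : Fin K → ℝ, (∀ a, 0 ≤ π a) ∧ ∑ a, π a = 1 ∧ (∀ i, ∑ a, π a * uc i a ≤ τ i) ∧
      (∀ π' : Fin K → ℝ, (∀ a, 0 ≤ π' a) → ∑ a, π' a = 1 →
        (∀ i, ∑ a, π' a * uc i a ≤ τ i) →
        ∑ a, π' a * ur a ≤ ∑ a, π a * ur a) ∧
      (Finset.univ.filter (fun a => π a ≠ 0)).card ≤ m + 1 := by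
  set F := stdSimplex ℝ (Fin K) ∩ {π | ∀ i, π ⬝ᵥ uc i ≤ τ i}
  have hF : IsCompact F := (isCompact_stdSimplex ℝ (Fin K)).inter_right <| by
    rw [Set.ofPred_forall]
    exact isClosed_iInter fun i =>
      isClosed_le (continuous_id.dotProduct continuous_const) continuous_const
  obtain ⟨π₀, hπ₀, hsum₀, hcon₀⟩ := hfeas
  obtain ⟨π₁, ⟨⟨hπ₁, hsum₁⟩, hcon₁⟩, hmax⟩ := hF.exists_isMaxOn ⟨π₀, ⟨hπ₀, hsum₀⟩, hcon₀⟩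
    (continuous_id.dotProduct continuous_const).continuousOn
  obtain ⟨π, hπ, hsum, hL, hr, hcard⟩ := exists_sparse_of_nonneg uc ur hπ₁
  refine ⟨π, hπ, hsum.trans hsum₁, fun i => (hL i).trans_le (hcon₁ i),
    fun π' h₁ h₂ h₃ => (hmax ⟨⟨h₁, h₂⟩, h₃⟩).trans hr, by simpa using hcard⟩

/-- the `m`-constraint LP `max ∑ π_a u^r_a` over the simplex subject to
`∑ π_a u^{c,(i)}_a ≤ τ_i` for all `i`, if feasible, has an optimal solution supported on
at most `m + 1` arms. -/
theorem stmt8 (K m : ℕ) (hK : 1 ≤ K) (hm : 1 ≤ m)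
    (ur : Fin K → ℝ) (uc : Fin m → Fin K → ℝ) (τ : Fin m → ℝ)
    (hfeas : ∃ π : Fin K → ℝ, (∀ a, 0 ≤ π a) ∧ ∑ a, π a = 1 ∧
      ∀ i, ∑ a, π a * uc i a ≤ τ i) :
    ∃ π : Fin K → ℝ, (∀ a, 0 ≤ π a) ∧ ∑ a, π a = 1 ∧ (∀ i, ∑ a, π a * uc i a ≤ τ i) ∧
      (∀ π' : Fin K → ℝ, (∀ a, 0 ≤ π' a) → ∑ a, π' a = 1 →
        (∀ i, ∑ a, π' a * uc i a ≤ τ i) →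
        ∑ a, π' a * ur a ≤ ∑ a, π a * ur a) ∧
      (Finset.univ.filter (fun a => π a ≠ 0)).card ≤ m + 1 :=
  stmt8_general K m ur uc τ hfeas
end

section
/- Let u^r₁, u^r₂, u^c₁, u^c₂, τ ∈ ℝ with u^c₁ < τ < u^c₂ and u^r₂ ≥ u^r₁. Then the policy π* = ((u^c₂ − τ)/(u^c₂ − u^c₁), (τ − u^c₁)/(u^c₂ − u^c₁)) lies in Δ₂, satisfies the constraint π*₁ u^c₁ + π*₂ u^c₂ ≤ τ, and maximizes π₁ u^r₁ + π₂ u^r₂ over all π ∈ Δ₂ with π₁ u^c₁ + π₂ u^c₂ ≤ τ. -/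
/-! On the simplex `Δ₂` the expected value of a pair `(a, b)` is `a + π₂ (b - a)`, affine in the
weight `π₂` of the second arm. Since `u^c₁ < u^c₂`, the cost constraint is the upper bound
`π₂ ≤ (τ - u^c₁)/(u^c₂ - u^c₁)`, attained by `π*`; since `u^r₁ ≤ u^r₂`, the reward is monotone in
`π₂`, so it is maximized at that bound. -/

section

variable {K : Type*} [Field K]

lemma two_point_mean_eq {q1 q2 : K} (a b : K) (hq : q1 + q2 = 1) :
    q1 * a + q2 * b = a + q2 * (b - a) := by
  rw [eq_sub_of_add_eq hq]; ring

lemma mixture_weights_add {a b τ : K} (hab : a ≠ b) :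
    (b - τ) / (b - a) + (τ - a) / (b - a) = 1 := by
  rw [← add_div, div_eq_one_iff_eq (sub_ne_zero.mpr hab.symm)]; ring

lemma mixture_mean_eq {a b τ : K} (hab : a ≠ b) :
    (b - τ) / (b - a) * a + (τ - a) / (b - a) * b = τ := by
  rw [two_point_mean_eq a b (mixture_weights_add hab),
    div_mul_cancel₀ _ (sub_ne_zero.mpr hab.symm)]
  ring

variable [LinearOrder K] [IsStrictOrderedRing K]

lemma two_point_mean_le_of_le {q1 q2 p1 p2 a b : K} (hq : q1 + q2 = 1) (hp : p1 + p2 = 1)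
    (hle : q2 ≤ p2) (hab : a ≤ b) : q1 * a + q2 * b ≤ p1 * a + p2 * b := by
  rw [two_point_mean_eq a b hq, two_point_mean_eq a b hp]
  gcongr

lemma le_mixture_weight_of_mean_le {q1 q2 a b τ : K} (hab : a < b) (hq : q1 + q2 = 1)
    (hmean : q1 * a + q2 * b ≤ τ) : q2 ≤ (τ - a) / (b - a) := by
  rw [le_div_iff₀ (sub_pos.mpr hab)]
  linarith [two_point_mean_eq a b hq]

end

/-- the explicit two-arm optimal mixture policy: if `u^c₁ < τ < u^c₂` and
`u^r₂ ≥ u^r₁`, then `π* = ((u^c₂ - τ)/(u^c₂ - u^c₁), (τ - u^c₁)/(u^c₂ - u^c₁))` lies in the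
simplex, is feasible, and maximizes the expected reward among feasible policies. -/
theorem stmt9 (ur1 ur2 uc1 uc2 τ : ℝ) (h1 : uc1 < τ) (h2 : τ < uc2) (hr : ur1 ≤ ur2) :
    0 ≤ (uc2 - τ) / (uc2 - uc1) ∧
    0 ≤ (τ - uc1) / (uc2 - uc1) ∧
    (uc2 - τ) / (uc2 - uc1) + (τ - uc1) / (uc2 - uc1) = 1 ∧
    (uc2 - τ) / (uc2 - uc1) * uc1 + (τ - uc1) / (uc2 - uc1) * uc2 ≤ τ ∧
    ∀ q1 q2 : ℝ, 0 ≤ q1 → 0 ≤ q2 → q1 + q2 = 1 → q1 * uc1 + q2 * uc2 ≤ τ →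
      q1 * ur1 + q2 * ur2
        ≤ (uc2 - τ) / (uc2 - uc1) * ur1 + (τ - uc1) / (uc2 - uc1) * ur2 := by
  have hc : uc1 < uc2 := h1.trans h2
  have hd : 0 < uc2 - uc1 := sub_pos.mpr hc
  refine ⟨div_nonneg (sub_nonneg.mpr h2.le) hd.le, div_nonneg (sub_nonneg.mpr h1.le) hd.le,
    mixture_weights_add hc.ne, (mixture_mean_eq hc.ne).le, ?_⟩
  intro q1 q2 _ _ hq hfeas
  exact two_point_mean_le_of_le hq (mixture_weights_add hc.ne)
    (le_mixture_weight_of_mean_le hc hq hfeas) hr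
end

section
/- For all real numbers x ∈ [1/2, 1) and y ∈ (0, 1), the binary relative entropy satisfies d(x, y) := x·log(x/y) + (1 − x)·log((1 − x)/(1 − y)) ≥ (1/2)·log(1/(4y)). -/
/-! Writing `d(x, y)` as cross entropy minus entropy,
`d(x, y) = -x log y - (1 - x) log (1 - y) - H(x)`, the entropy is at most `log 2`, the term
`-(1 - x) log (1 - y)` is nonnegative, and `-x log y ≥ -(1/2) log y` because `log y < 0` and
`x ≥ 1/2`. What remains is `-(1/2) log y - log 2 = (1/2) log (1/(4y))`. -/

open Real

lemma mul_log_div_eq_neg_mul_log_inv_sub (a : ℝ) {b : ℝ} (hb : b ≠ 0) :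
    a * log (a / b) = -(a * log a⁻¹) - a * log b := by
  rcases eq_or_ne a 0 with rfl | ha
  · simp
  · rw [log_div ha hb, log_inv]
    ring

lemma binKL_eq_neg_binEntropy_sub (x : ℝ) {y : ℝ} (hy₀ : y ≠ 0) (hy₁ : y ≠ 1) :
    x * log (x / y) + (1 - x) * log ((1 - x) / (1 - y))
      = -binEntropy x - x * log y - (1 - x) * log (1 - y) := by
  rw [mul_log_div_eq_neg_mul_log_inv_sub x hy₀,
    mul_log_div_eq_neg_mul_log_inv_sub (1 - x) (sub_ne_zero.mpr hy₁.symm), binEntropy]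
  ring

/-- for `x ∈ [1/2, 1)` and `y ∈ (0, 1)`, the binary relative entropy satisfies
`d(x, y) = x log(x/y) + (1 - x) log((1 - x)/(1 - y)) ≥ (1/2) log(1/(4y))`. -/
theorem stmt12 (x y : ℝ) (hx : x ∈ Set.Ico (1 / 2 : ℝ) 1) (hy : y ∈ Set.Ioo (0 : ℝ) 1) :
    (1 / 2) * Real.log (1 / (4 * y))
      ≤ x * Real.log (x / y) + (1 - x) * Real.log ((1 - x) / (1 - y)) := by
  obtain ⟨hx_half, hx_one⟩ := hx
  obtain ⟨hy₀, hy₁⟩ := hy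
  have hx_log_y : x * log y ≤ (1 / 2) * log y :=
    mul_le_mul_of_nonpos_right hx_half (log_neg hy₀ hy₁).le
  have hone_sub_x_log : (1 - x) * log (1 - y) ≤ 0 :=
    mul_nonpos_of_nonneg_of_nonpos (by linarith) (log_nonpos (by linarith) (by linarith))
  have hlhs : (1 / 2) * log (1 / (4 * y)) = -log 2 - (1 / 2) * log y := by
    rw [one_div (4 * y), log_inv, log_mul (by norm_num) hy₀.ne',
      show (4 : ℝ) = 2 ^ 2 by norm_num, log_pow]
    push_cast
    ring
  rw [hlhs, binKL_eq_neg_binEntropy_sub x hy₀.ne' hy₁.ne]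
  linarith [binEntropy_le_log_two (p := x)]
end
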